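/- arXiv:2310.12653 — 3 statements merged into one kernel-verified Lean document; each statement's English description precedes it below -/
import Mathlib

section
/- (Tweedie's formula / Miyasawa estimate) Let X have density f_X on ℝ^d, let σ > 0, and let Y = X + σ·N with N ~ N(0, Id) independent of X. Then for every y with f_Y(y) > 0, the conditional mean satisfies E[X | Y = y] = y + σ² ∇ log f_Y(y), where f_Y = G_{0,σ²Id} * f_X. -/
open MeasureTheory Real
open scoped RealInnerProductSpace

noncomputable section

/-- Gaussian kernel `G_{0,σ²Id}` on `ℝ^d`. -/
def gaussKernel (d : ℕ) (σ : ℝ) (z : EuclideanSpace ℝ (Fin d)) : ℝ :=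
  (2 * π * σ ^ 2) ^ (-(d : ℝ) / 2) * exp (-‖z‖ ^ 2 / (2 * σ ^ 2))

variable {d : ℕ}

lemma gauss_nonneg (σ : ℝ) (hσ : 0 < σ) (z : EuclideanSpace ℝ (Fin d)) :
    0 ≤ gaussKernel d σ z :=
  mul_nonneg (Real.rpow_nonneg (by positivity) _) (Real.exp_nonneg _)

lemma gauss_le (σ : ℝ) (hσ : 0 < σ) (z : EuclideanSpace ℝ (Fin d)) :
    gaussKernel d σ z ≤ (2 * π * σ ^ 2) ^ (-(d : ℝ) / 2) := by
  have h1 : exp (-‖z‖ ^ 2 / (2 * σ ^ 2)) ≤ 1 := by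
    apply Real.exp_le_one_iff.mpr
    have h2 : (0:ℝ) ≤ ‖z‖^2 / (2 * σ^2) := by positivity
    have : -‖z‖ ^ 2 / (2 * σ ^ 2) = -(‖z‖^2 / (2 * σ^2)) := by ring
    linarith [this]
  calc gaussKernel d σ z ≤ (2 * π * σ ^ 2) ^ (-(d : ℝ) / 2) * 1 :=
        mul_le_mul_of_nonneg_left h1 (Real.rpow_nonneg (by positivity) _)
    _ = _ := mul_one _

lemma gauss_mul_norm_le (σ : ℝ) (hσ : 0 < σ) (z : EuclideanSpace ℝ (Fin d)) :
    gaussKernel d σ z * ‖z‖ ≤ (2 * π * σ ^ 2) ^ (-(d : ℝ) / 2) * σ := by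
  have key : exp (-‖z‖ ^ 2 / (2 * σ ^ 2)) * ‖z‖ ≤ σ := by
    set t := ‖z‖ with ht
    have h0 : (0:ℝ) ≤ t := norm_nonneg z
    have he : exp (-t ^ 2 / (2 * σ ^ 2)) = (exp (t ^ 2 / (2 * σ ^ 2)))⁻¹ := by
      rw [← Real.exp_neg]; ring_nf
    have h1 : t ^ 2 / (2 * σ ^ 2) + 1 ≤ exp (t ^ 2 / (2 * σ ^ 2)) := Real.add_one_le_exp _
    have h2 : (0:ℝ) < exp (t ^ 2 / (2 * σ ^ 2)) := Real.exp_pos _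
    rw [he, inv_mul_le_iff₀ h2]
    have h3 : σ * (t ^ 2 / (2 * σ ^ 2) + 1) ≤ σ * exp (t ^ 2 / (2 * σ ^ 2)) :=
      mul_le_mul_of_nonneg_left h1 hσ.le
    have h4 : t ≤ σ * (t ^ 2 / (2 * σ ^ 2) + 1) := by
      have hu : t ^ 2 / (2 * σ ^ 2) * (2 * σ ^ 2) = t ^ 2 := by
        field_simp
      nlinarith [sq_nonneg (t - σ), hσ, mul_pos hσ hσ]
    linarith
  unfold gaussKernel
  rw [mul_assoc]
  exact mul_le_mul_of_nonneg_left key (Real.rpow_nonneg (by positivity) _)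

lemma gauss_continuous (σ : ℝ) : Continuous (gaussKernel d σ) := by
  unfold gaussKernel
  fun_prop
lemma gauss_hasFDerivAt (σ : ℝ) (x z : EuclideanSpace ℝ (Fin d)) :
    HasFDerivAt (fun w => gaussKernel d σ (w - x))
      (innerSL ℝ ((-(σ^2)⁻¹ * gaussKernel d σ (z - x)) • (z - x))) z := by
  have h1 : HasFDerivAt (fun w : EuclideanSpace ℝ (Fin d) => w - x)
      (ContinuousLinearMap.id ℝ _) z := (hasFDerivAt_id z).sub_const x
  have h2 := (h1.inner ℝ h1)
  simp only [real_inner_self_eq_norm_sq] at h2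
  have h4 := (((h2.const_mul (-(2 * σ ^ 2)⁻¹)).exp).const_mul
      ((2 * π * σ ^ 2) ^ (-(d : ℝ) / 2)))
  have h3 : HasFDerivAt (fun w => gaussKernel d σ (w - x))
      ((2 * π * σ ^ 2) ^ (-(d:ℝ) / 2) •
        (exp (-(2 * σ ^ 2)⁻¹ * ‖z - x‖^2) •
          ((-(2 * σ ^ 2)⁻¹) • ((fderivInnerCLM ℝ ((z:EuclideanSpace ℝ (Fin d)) - x, z - x)).comp
            ((ContinuousLinearMap.id ℝ _).prod (ContinuousLinearMap.id ℝ _)))))) z := by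
    refine HasFDerivAt.congr_of_eventuallyEq h4 (Filter.Eventually.of_forall fun w => ?_)
    simp only [gaussKernel]
    ring_nf
  refine h3.congr_fderiv ?_
  ext h : 1
  simp only [innerSL_apply_apply, real_inner_smul_left, ContinuousLinearMap.coe_smul',
    Pi.smul_apply, ContinuousLinearMap.coe_comp', Function.comp_apply,
    ContinuousLinearMap.prod_apply, ContinuousLinearMap.coe_id', id_eq,
    fderivInnerCLM_apply, smul_eq_mul, gaussKernel, real_inner_comm (z - x) h]
  ring

/-- Tweedie's formula / Miyasawa estimate: if `fY = G_{0,σ²Id} * fX`,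
then at every `y` with `fY y > 0`, the conditional mean
`E[X | Y = y] = ∫ x f_{X|Y}(x|y) dx` equals `y + σ² ∇ log fY(y)`. -/
theorem tweedie_formula
    (d : ℕ) (σ : ℝ) (hσ : 0 < σ)
    (fX : EuclideanSpace ℝ (Fin d) → ℝ) (hnonneg : ∀ x, 0 ≤ fX x)
    (hint : Integrable fX) (hprob : ∫ x, fX x = 1)
    (hmom : Integrable (fun x => ‖x‖ * fX x))
    (fY : EuclideanSpace ℝ (Fin d) → ℝ)
    (hfY : ∀ y, fY y = ∫ x, gaussKernel d σ (y - x) * fX x)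
    (y : EuclideanSpace ℝ (Fin d)) (hpos : 0 < fY y) :
    (∫ x, (gaussKernel d σ (y - x) * fX x / fY y) • x) =
      y + σ ^ 2 • gradient (fun z => Real.log (fY z)) y := by
  have hσ2 : (σ:ℝ) ^ 2 ≠ 0 := by positivity
  set c₀ : ℝ := (2 * π * σ ^ 2) ^ (-(d : ℝ) / 2) with hc₀
  have hc₀0 : 0 ≤ c₀ := Real.rpow_nonneg (by positivity) _
  have hgm : ∀ z : EuclideanSpace ℝ (Fin d),
      AEStronglyMeasurable (fun x => gaussKernel d σ (z - x) * fX x) volume := fun z =>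
    (((gauss_continuous σ).comp (continuous_const.sub continuous_id)).aestronglyMeasurable).mul
      hint.1
  have habs : ∀ x, |fX x| = fX x := fun x => abs_of_nonneg (hnonneg x)
  have hI0 : ∀ z, Integrable (fun x => gaussKernel d σ (z - x) * fX x) := fun z => by
    refine (hint.const_mul c₀).mono' (hgm z) (Filter.Eventually.of_forall fun x => ?_)
    rw [Real.norm_eq_abs, abs_mul, habs, abs_of_nonneg (gauss_nonneg σ hσ _)]
    exact mul_le_mul_of_nonneg_right (gauss_le σ hσ _) (hnonneg x)
  have hI1 : Integrable (fun x => (gaussKernel d σ (y - x) * fX x) • x) := by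
    refine (hmom.const_mul c₀).mono' ((hgm y).smul aestronglyMeasurable_id)
      (Filter.Eventually.of_forall fun x => ?_)
    rw [norm_smul, Real.norm_eq_abs, abs_mul, habs, abs_of_nonneg (gauss_nonneg σ hσ _)]
    have h := mul_le_mul_of_nonneg_right (gauss_le σ hσ (y - x))
      (mul_nonneg (hnonneg x) (norm_nonneg x))
    calc gaussKernel d σ (y - x) * fX x * ‖x‖
        = gaussKernel d σ (y - x) * (fX x * ‖x‖) := by ring
      _ ≤ c₀ * (fX x * ‖x‖) := h
      _ = c₀ * (‖x‖ * fX x) := by ring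
  set v : EuclideanSpace ℝ (Fin d) → EuclideanSpace ℝ (Fin d) :=
    fun x => (-(σ ^ 2)⁻¹ * (gaussKernel d σ (y - x) * fX x)) • (y - x) with hv
  have hvmeas : AEStronglyMeasurable v volume :=
    (((hgm y).const_mul (-(σ ^ 2)⁻¹)).smul
      ((continuous_const.sub continuous_id).aestronglyMeasurable))
  have hvnorm : ∀ x, ‖v x‖ ≤ ((σ ^ 2)⁻¹ * (c₀ * σ)) * fX x := by
    intro x
    rw [hv]
    rw [norm_smul, Real.norm_eq_abs, abs_mul, abs_neg, abs_inv, abs_of_nonneg (sq_nonneg σ),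
      abs_mul, habs, abs_of_nonneg (gauss_nonneg σ hσ _)]
    have hb := gauss_mul_norm_le σ hσ (y - x)
    have h2 := mul_le_mul_of_nonneg_right hb (hnonneg x)
    have h3 : (0:ℝ) ≤ (σ ^ 2)⁻¹ := by positivity
    calc (σ ^ 2)⁻¹ * (gaussKernel d σ (y - x) * fX x) * ‖y - x‖
        = (σ ^ 2)⁻¹ * (gaussKernel d σ (y - x) * ‖y - x‖ * fX x) := by ring
      _ ≤ (σ ^ 2)⁻¹ * (c₀ * σ * fX x) := mul_le_mul_of_nonneg_left h2 h3
      _ = ((σ ^ 2)⁻¹ * (c₀ * σ)) * fX x := by ring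
  have hIv : Integrable v :=
    ((hint.const_mul ((σ ^ 2)⁻¹ * (c₀ * σ))).mono' hvmeas
      (Filter.Eventually.of_forall hvnorm))
  set F' : EuclideanSpace ℝ (Fin d) → EuclideanSpace ℝ (Fin d) →
      (EuclideanSpace ℝ (Fin d) →L[ℝ] ℝ) :=
    fun z x => innerSL ℝ ((-(σ ^ 2)⁻¹ * (gaussKernel d σ (z - x) * fX x)) • (z - x)) with hF'
  have h_diff : ∀ (x z : EuclideanSpace ℝ (Fin d)),
      HasFDerivAt (fun w => gaussKernel d σ (w - x) * fX x) (F' z x) z := by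
    intro x z
    have h := (gauss_hasFDerivAt σ x z).mul_const (fX x)
    refine h.congr_fderiv ?_
    ext h' : 1
    simp only [hF', innerSL_apply_apply, real_inner_smul_left, ContinuousLinearMap.coe_smul',
      Pi.smul_apply, smul_eq_mul]
    ring
  have hF'meas : AEStronglyMeasurable (F' y) volume := by
    have : F' y = fun x => innerSL ℝ (v x) := rfl
    rw [this]
    exact (innerSL ℝ).continuous.comp_aestronglyMeasurable hvmeas
  have h_bound : ∀ᵐ x ∂(volume : Measure (EuclideanSpace ℝ (Fin d))),
      ∀ z ∈ Metric.ball y 1, ‖F' z x‖ ≤ ((σ ^ 2)⁻¹ * (c₀ * σ)) * fX x := by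
    refine Filter.Eventually.of_forall fun x => fun z _ => ?_
    rw [hF']
    rw [innerSL_apply_norm]
    rw [norm_smul, Real.norm_eq_abs, abs_mul, abs_neg, abs_inv, abs_of_nonneg (sq_nonneg σ),
      abs_mul, habs, abs_of_nonneg (gauss_nonneg σ hσ _)]
    have hb := gauss_mul_norm_le σ hσ (z - x)
    have h2 := mul_le_mul_of_nonneg_right hb (hnonneg x)
    have h3 : (0:ℝ) ≤ (σ ^ 2)⁻¹ := by positivity
    calc (σ ^ 2)⁻¹ * (gaussKernel d σ (z - x) * fX x) * ‖z - x‖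
        = (σ ^ 2)⁻¹ * (gaussKernel d σ (z - x) * ‖z - x‖ * fX x) := by ring
      _ ≤ (σ ^ 2)⁻¹ * (c₀ * σ * fX x) := mul_le_mul_of_nonneg_left h2 h3
      _ = ((σ ^ 2)⁻¹ * (c₀ * σ)) * fX x := by ring
  have hmain : HasFDerivAt (fun z => ∫ x, gaussKernel d σ (z - x) * fX x)
      (∫ x, F' y x) y := by
    refine hasFDerivAt_integral_of_dominated_of_fderiv_le (Metric.ball_mem_nhds y one_pos)
      (Filter.Eventually.of_forall fun z => hgm z) (hI0 y) hF'meas h_bound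
      (hint.const_mul _) ?_
    exact Filter.Eventually.of_forall fun x => fun z _ => h_diff x z
  have hFyfun : (fun z => ∫ x, gaussKernel d σ (z - x) * fX x) = fY :=
    funext fun z => (hfY z).symm
  rw [hFyfun] at hmain
  have hint_eq : (∫ x, F' y x) = innerSL ℝ (∫ x, v x) :=
    ContinuousLinearMap.integral_comp_comm (innerSL ℝ) hIv
  rw [hint_eq] at hmain
  set G : EuclideanSpace ℝ (Fin d) := ∫ x, v x with hG
  have hGrad : HasGradientAt fY G y := by
    rw [hasGradientAt_iff_hasFDerivAt]
    refine hmain.congr_fderiv ?_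
    ext h : 1
    simp [InnerProductSpace.toDual_apply_apply]
  have hlog : HasGradientAt (fun z => Real.log (fY z)) ((fY y)⁻¹ • G) y := by
    have h1 := (Real.hasDerivAt_log (ne_of_gt hpos)).comp_hasFDerivAt y hGrad.hasFDerivAt
    rw [hasGradientAt_iff_hasFDerivAt]
    refine h1.congr_fderiv ?_
    ext h
    simp [InnerProductSpace.toDual_apply_apply, real_inner_smul_left]
  rw [hlog.gradient]
  have hsmul_y : Integrable (fun x => (gaussKernel d σ (y - x) * fX x) • y) :=
    (hI0 y).smul_const y
  have hGsplit : G = (-(σ ^ 2)⁻¹) •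
      ((fY y) • y - ∫ x, (gaussKernel d σ (y - x) * fX x) • x) := by
    have hv2 : v = fun x => (-(σ ^ 2)⁻¹) •
        ((gaussKernel d σ (y - x) * fX x) • y - (gaussKernel d σ (y - x) * fX x) • x) := by
      funext x
      show (-(σ ^ 2)⁻¹ * (gaussKernel d σ (y - x) * fX x)) • (y - x) = _
      module
    rw [hG, hv2, integral_smul, integral_sub hsmul_y hI1, integral_smul_const, ← hfY y]
  rw [hGsplit]
  have hLHS : (∫ x, (gaussKernel d σ (y - x) * fX x / fY y) • x) =
      (fY y)⁻¹ • ∫ x, (gaussKernel d σ (y - x) * fX x) • x := by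
    rw [← integral_smul]
    congr 1
    funext x
    rw [smul_smul, div_eq_inv_mul, mul_comm]
  rw [hLHS]
  set M : EuclideanSpace ℝ (Fin d) := ∫ x, (gaussKernel d σ (y - x) * fX x) • x
  have hfy0 : fY y ≠ 0 := ne_of_gt hpos
  match_scalars
  · field_simp
  · field_simp
    norm_num
end
end

section
/- (Simplex projection, Held et al.) Let x ∈ ℝ^m and let u be x sorted in decreasing order. Let K = max{ k ∈ {1,…,m} : (Σ_{r=1}^k u_r − 1)/k < u_k } and τ = (Σ_{k=1}^K u_k − 1)/K. Then y defined by yᵢ = max{xᵢ − τ, 0} is the Euclidean projection of x onto the unit simplex Δ^m = { z ∈ ℝ^m : zᵢ ≥ 0, Σᵢ zᵢ = 1 }, i.e., y uniquely minimizes ‖z − x‖² over z ∈ Δ^m. -/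
/-!
For any threshold `τ`, the clipped vector `y = max(x - τ, 0)` satisfies the variational
inequality `⟪z - y, y - x⟫ ≥ 0` against every nonnegative `z` of the same total mass: on the
support of `y` the vector `y - x` is the constant `-τ`, and off it `y - x = -x ≥ -τ`.
The variational inequality makes `y` the unique nearest point of the simplex once `∑ yᵢ = 1`.
For the sorting threshold this holds: maximality of `K` and `u` being decreasing give
`τ < u_i ↔ i ≤ K`, so `∑ yᵢ = ∑_{i ≤ K} (u_i - τ) = 1` by the choice of `τ`.
-/

open Finset

section Projection

variable {ι : Type*} [Fintype ι]

theorem sum_sq_sub_lt_of_sum_mul_nonneg {x y z : ι → ℝ}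
    (hvi : 0 ≤ ∑ i, (z i - y i) * (y i - x i)) (hne : z ≠ y) :
    ∑ i, (y i - x i) ^ 2 < ∑ i, (z i - x i) ^ 2 := by
  obtain ⟨i₀, hi₀⟩ := Function.ne_iff.mp hne
  have hdist : 0 < ∑ i, (z i - y i) ^ 2 :=
    sum_pos' (fun i _ => sq_nonneg _) ⟨i₀, mem_univ _, pow_two_pos_of_ne_zero (sub_ne_zero.mpr hi₀)⟩
  have hexpand : ∑ i, (z i - x i) ^ 2
      = ∑ i, (y i - x i) ^ 2 + ∑ i, (z i - y i) ^ 2 + 2 * ∑ i, (z i - y i) * (y i - x i) := by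
    rw [mul_sum, ← sum_add_distrib, ← sum_add_distrib]
    exact sum_congr rfl fun i _ => by ring
  linarith

theorem mul_sub_max_sub_le {a c τ : ℝ} (hc : 0 ≤ c) :
    τ * (max (a - τ) 0 - c) ≤ (c - max (a - τ) 0) * (max (a - τ) 0 - a) := by
  rcases le_total τ a with h | h
  · rw [max_eq_left (sub_nonneg.mpr h)]
    linarith
  · rw [max_eq_right (sub_nonpos.mpr h)]
    nlinarith

theorem sum_mul_sub_max_sub_nonneg {x z : ι → ℝ} {τ : ℝ} (hz : ∀ i, 0 ≤ z i)
    (hmass : ∑ i, z i = ∑ i, max (x i - τ) 0) :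
    0 ≤ ∑ i, (z i - max (x i - τ) 0) * (max (x i - τ) 0 - x i) := by
  have hzero : ∑ i, τ * (max (x i - τ) 0 - z i) = 0 := by
    rw [← mul_sum, sum_sub_distrib, hmass, sub_self, mul_zero]
  exact hzero.ge.trans (sum_le_sum fun i _ => mul_sub_max_sub_le (hz i))

theorem sum_sq_max_sub_lt {x z : ι → ℝ} {τ : ℝ} (hz : ∀ i, 0 ≤ z i)
    (hmass : ∑ i, z i = ∑ i, max (x i - τ) 0) (hne : z ≠ fun i => max (x i - τ) 0) :
    ∑ i, (max (x i - τ) 0 - x i) ^ 2 < ∑ i, (z i - x i) ^ 2 :=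
  sum_sq_sub_lt_of_sum_mul_nonneg (sum_mul_sub_max_sub_nonneg hz hmass) hne

end Projection

theorem sum_max_sub_eq_sum_Iic {α : Type*} [LinearOrder α] [Fintype α] [LocallyFiniteOrderBot α]
    {u : α → ℝ} {τ : ℝ} {K : α} (hcut : ∀ i, τ < u i ↔ i ≤ K) :
    ∑ i, max (u i - τ) 0 = ∑ i ∈ Iic K, (u i - τ) := by
  rw [← sum_filter_add_sum_filter_not univ (· ≤ K)]
  have hIic : univ.filter (· ≤ K) = Iic K := by ext; simp
  have hpos : ∀ i ∈ Iic K, max (u i - τ) 0 = u i - τ := fun i hi =>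
    max_eq_left (sub_nonneg.mpr ((hcut i).mpr (mem_Iic.mp hi)).le)
  have hneg : ∀ i ∈ univ.filter (¬ · ≤ K), max (u i - τ) 0 = 0 := fun i hi =>
    max_eq_right (sub_nonpos.mpr (not_lt.mp fun h => (mem_filter.mp hi).2 ((hcut i).mp h)))
  rw [hIic, sum_congr rfl hpos, sum_congr rfl hneg, sum_const_zero, add_zero]

theorem add_div_add_one_lt_iff {s a c : ℝ} (hc : 0 < c) : (s + a) / (c + 1) < a ↔ s / c < a := by
  rw [div_lt_iff₀ hc, div_lt_iff₀ (by linarith)]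
  constructor <;> intro <;> linarith

section Threshold

variable {m : ℕ} {u : Fin m → ℝ}

theorem Fin.Iic_eq_insert_Iic {K j : Fin m} (hj : (j : ℕ) = K + 1) : Iic j = insert j (Iic K) := by
  ext r
  simp only [mem_Iic, mem_insert, Fin.le_def, Fin.ext_iff]
  omega

theorem threshold_lt_iff_le (hu : Antitone u) {K : Fin m}
    (hK : (∑ r ∈ Iic K, u r - 1) / ((K : ℕ) + 1) < u K)
    (hKmax : ∀ k : Fin m, (∑ r ∈ Iic k, u r - 1) / ((k : ℕ) + 1) < u k → k ≤ K) (i : Fin m) :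
    (∑ r ∈ Iic K, u r - 1) / ((K : ℕ) + 1) < u i ↔ i ≤ K := by
  refine ⟨fun hi => ?_, fun hi => hK.trans_le (hu hi)⟩
  by_contra! hKi
  let j : Fin m := ⟨K + 1, lt_of_le_of_lt hKi i.isLt⟩
  have hKj : K < j := Fin.lt_def.mpr (Nat.lt_succ_self _)
  have hj_sum : ∑ r ∈ Iic j, u r - 1 = (∑ r ∈ Iic K, u r - 1) + u j := by
    rw [Fin.Iic_eq_insert_Iic rfl, sum_insert (by simpa using hKj)]
    ring
  have hj_mean : (∑ r ∈ Iic j, u r - 1) / ((j : ℕ) + 1) < u j := by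
    rw [hj_sum, show ((j : ℕ) : ℝ) = (K : ℕ) + 1 by simp [j], add_div_add_one_lt_iff (by positivity)]
    exact hi.trans_le (hu (Fin.le_def.mpr hKi))
  exact hKj.not_ge (hKmax j hj_mean)

end Threshold

theorem simplex_projection_general
    (m : ℕ) (x u : Fin m → ℝ)
    (hsort : ∃ σ : Equiv.Perm (Fin m), u = x ∘ σ)
    (hdec : ∀ i j : Fin m, i ≤ j → u j ≤ u i)
    (K : Fin m)
    (hK : (∑ r ∈ Finset.Iic K, u r - 1) / ((K : ℕ) + 1) < u K)
    (hKmax : ∀ k : Fin m, (∑ r ∈ Finset.Iic k, u r - 1) / ((k : ℕ) + 1) < u k → k ≤ K)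
    (τ : ℝ) (hτ : τ = (∑ r ∈ Finset.Iic K, u r - 1) / ((K : ℕ) + 1))
    (y : Fin m → ℝ) (hy : ∀ i, y i = max (x i - τ) 0) :
    (∀ i, 0 ≤ y i) ∧ (∑ i, y i = 1) ∧
    ∀ z : Fin m → ℝ, (∀ i, 0 ≤ z i) → (∑ i, z i = 1) → z ≠ y →
      ∑ i, (y i - x i) ^ 2 < ∑ i, (z i - x i) ^ 2 := by
  obtain ⟨σ, rfl⟩ := hsort
  obtain rfl : y = fun i => max (x i - τ) 0 := funext hy
  have hcut : ∀ i, τ < x (σ i) ↔ i ≤ K := hτ ▸ threshold_lt_iff_le hdec hK hKmax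
  have hmass : ∑ i, max (x i - τ) 0 = 1 := by
    rw [← Equiv.sum_comp σ, sum_max_sub_eq_sum_Iic hcut, sum_sub_distrib, sum_const,
      Fin.card_Iic, nsmul_eq_mul, hτ]
    field_simp
    simp only [Function.comp_apply]
    push_cast
    ring
  exact ⟨fun i => le_max_right _ _, hmass, fun z hz hz1 hne =>
    sum_sq_max_sub_lt hz (hz1.trans hmass.symm) hne⟩

/-- Held et al. simplex projection: sorting `x` decreasingly into `u`,
taking `K` maximal with `(Σ_{r≤K} u_r − 1)/#{r≤K} < u_K`, and
`τ = (Σ_{r≤K} u_r − 1)/#{r≤K}`, the vector `y = max(x − τ, 0)` is the unique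
Euclidean projection of `x` onto the unit simplex. -/
theorem simplex_projection
    (m : ℕ) (hm : 0 < m) (x u : Fin m → ℝ)
    (hsort : ∃ σ : Equiv.Perm (Fin m), u = x ∘ σ)
    (hdec : ∀ i j : Fin m, i ≤ j → u j ≤ u i)
    (K : Fin m)
    (hK : (∑ r ∈ Finset.Iic K, u r - 1) / ((K : ℕ) + 1) < u K)
    (hKmax : ∀ k : Fin m, (∑ r ∈ Finset.Iic k, u r - 1) / ((k : ℕ) + 1) < u k → k ≤ K)
    (τ : ℝ) (hτ : τ = (∑ r ∈ Finset.Iic K, u r - 1) / ((K : ℕ) + 1))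
    (y : Fin m → ℝ) (hy : ∀ i, y i = max (x i - τ) 0) :
    (∀ i, 0 ≤ y i) ∧ (∑ i, y i = 1) ∧
    ∀ z : Fin m → ℝ, (∀ i, 0 ≤ z i) → (∑ i, z i = 1) → z ≠ y →
      ∑ i, (y i - x i) ^ 2 < ∑ i, (z i - x i) ^ 2 :=
  simplex_projection_general m x u hsort hdec K hK hKmax τ hτ y hy
end

section
/- The Euclidean projection of a nonzero x ∈ ℝ^m onto the unit ℓ¹-sphere { z ∈ ℝ^m : ‖z‖₁ = 1 } is given by proj(x) = sgn(x) ⊙ proj_{Δ^m}(|x|), where |x| is the entrywise absolute value, sgn the entrywise sign, ⊙ the entrywise product, and proj_{Δ^m} the projection onto the unit simplex, provided ‖x‖₁ ≥ 1 (so that the projection onto the simplex has the same support signs). -/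
/-! If `x` has ℓ¹-norm at least one, the simplex projection `p` of `|x|` satisfies
`0 ≤ p ≤ |x|`: were `pⱼ > |xⱼ|`, some mass could be moved from `j` to a coordinate `k`
with `pₖ < |xₖ|` (one exists since `∑ p = 1 ≤ ∑ |x|`), strictly decreasing the distance.
So `p` vanishes off the support of `x`, `y = sgn(x) ⊙ p` has `|y| = p`, and
`‖y - x‖ = ‖p - |x|‖`. For `z` on the ℓ¹-sphere, `|z|` lies in the simplex and
`‖|z| - |x|‖ ≤ ‖z - x‖`, which gives the minimality of `y`. -/

open Finset Function

section Transfer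

variable {ι : Type*} [Fintype ι] [DecidableEq ι]

lemma sum_sq_sub_update_update (p a : ι → ℝ) {j k : ι} (hjk : j ≠ k) (ε : ℝ) :
    ∑ i, (update (update p j (p j - ε)) k (p k + ε) i - a i) ^ 2 =
      ∑ i, (p i - a i) ^ 2 + 2 * ε * (ε - (p j - a j + (a k - p k))) := by
  rw [← sub_eq_iff_eq_add', ← sum_sub_distrib,
    Fintype.sum_eq_add j k hjk fun i hi => by simp [hi.1, hi.2]]
  simp [hjk]
  ring

lemma update_update_mem_stdSimplex {p : ι → ℝ} (hp : p ∈ stdSimplex ℝ ι) {j k : ι}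
    (hjk : j ≠ k) {ε : ℝ} (hε : 0 ≤ ε) (hεj : ε ≤ p j) :
    update (update p j (p j - ε)) k (p k + ε) ∈ stdSimplex ℝ ι := by
  refine ⟨fun i => ?_, ?_⟩
  · simp only [update_apply]
    split_ifs
    exacts [add_nonneg (hp.1 k) hε, sub_nonneg.mpr hεj, hp.1 i]
  · rw [← hp.2, ← sub_eq_zero, ← sum_sub_distrib,
      Fintype.sum_eq_add j k hjk fun i hi => by simp [hi.1, hi.2]]
    simp [hjk]

lemma le_max_of_isMinOn_stdSimplex {a p : ι → ℝ} (hp : p ∈ stdSimplex ℝ ι)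
    (hmin : IsMinOn (fun z => ∑ i, (z i - a i) ^ 2) (stdSimplex ℝ ι) p)
    (ha : 1 ≤ ∑ i, a i) (j : ι) : p j ≤ max (a j) 0 := by
  by_contra! hj
  obtain ⟨haj, hpj⟩ := max_lt_iff.mp hj
  obtain ⟨k, hk⟩ : ∃ k, p k < a k := by
    by_contra! hle
    have : ∑ i, a i < ∑ i, p i := sum_lt_sum (fun i _ => hle i) ⟨j, mem_univ j, haj⟩
    linarith [hp.2]
  have hjk : j ≠ k := by rintro rfl; linarith
  set δ := p j - a j + (a k - p k)
  have hδ : 0 < δ := by linarith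
  set ε := min (p j) (δ / 2)
  have hε : 0 < ε := lt_min hpj (half_pos hδ)
  have hεδ : ε < δ := (min_le_right _ _).trans_lt (half_lt_self hδ)
  have hdecrease : ∑ i, (p i - a i) ^ 2 ≤
      ∑ i, (update (update p j (p j - ε)) k (p k + ε) i - a i) ^ 2 :=
    hmin (update_update_mem_stdSimplex hp hjk hε.le (min_le_left _ _))
  rw [sum_sq_sub_update_update p a hjk] at hdecrease
  nlinarith

end Transfer

lemma abs_sign_mul {x p : ℝ} (hp : 0 ≤ p) (hpx : p ≤ |x|) : |Real.sign x * p| = p := by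
  rcases lt_trichotomy x 0 with hx | rfl | hx
  · simp [Real.sign_of_neg hx, abs_of_nonneg hp]
  · simp [le_antisymm (by simpa using hpx) hp]
  · simp [Real.sign_of_pos hx, abs_of_nonneg hp]

lemma sign_mul_sub_sq {x p : ℝ} (hp : 0 ≤ p) (hpx : p ≤ |x|) :
    (Real.sign x * p - x) ^ 2 = (p - |x|) ^ 2 := by
  rcases lt_trichotomy x 0 with hx | rfl | hx
  · rw [Real.sign_of_neg hx, abs_of_neg hx]; ring
  · simp [le_antisymm (by simpa using hpx) hp]
  · rw [Real.sign_of_pos hx, abs_of_pos hx]; ring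

lemma abs_sub_abs_sq_le (a b : ℝ) : (|a| - |b|) ^ 2 ≤ (a - b) ^ 2 :=
  sq_le_sq.mpr (abs_abs_sub_abs_le_abs_sub a b)

theorem l1_sphere_projection_general
    (m : ℕ) (x : Fin m → ℝ) (hx1 : 1 ≤ ∑ i, |x i|)
    (p : Fin m → ℝ)
    (hpmem : (∀ i, 0 ≤ p i) ∧ ∑ i, p i = 1)
    (hpproj : ∀ z : Fin m → ℝ, (∀ i, 0 ≤ z i) → (∑ i, z i = 1) →
      ∑ i, (p i - |x i|) ^ 2 ≤ ∑ i, (z i - |x i|) ^ 2)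
    (y : Fin m → ℝ) (hy : ∀ i, y i = Real.sign (x i) * p i) :
    (∑ i, |y i| = 1) ∧
    ∀ z : Fin m → ℝ, (∑ i, |z i| = 1) →
      ∑ i, (y i - x i) ^ 2 ≤ ∑ i, (z i - x i) ^ 2 := by
  have hp_le (i : Fin m) : p i ≤ |x i| := by
    simpa using le_max_of_isMinOn_stdSimplex hpmem (fun z hz => hpproj z hz.1 hz.2) hx1 i
  refine ⟨?_, fun z hz => ?_⟩
  · simp_rw [hy, abs_sign_mul (hpmem.1 _) (hp_le _)]
    exact hpmem.2
  calc ∑ i, (y i - x i) ^ 2 = ∑ i, (p i - |x i|) ^ 2 := by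
        simp_rw [hy, sign_mul_sub_sq (hpmem.1 _) (hp_le _)]
    _ ≤ ∑ i, (|z i| - |x i|) ^ 2 := hpproj (fun i => |z i|) (fun i => abs_nonneg _) hz
    _ ≤ ∑ i, (z i - x i) ^ 2 := sum_le_sum fun i _ => abs_sub_abs_sq_le (z i) (x i)

/-- for `x ≠ 0` with `‖x‖₁ ≥ 1`, the Euclidean projection of `x` onto
the unit ℓ¹-sphere is `sgn(x) ⊙ proj_{Δ^m}(|x|)`: if `p` is the projection of the
entrywise absolute value `|x|` onto the unit simplex, then `y i = sgn(xᵢ)·pᵢ` lies on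
the ℓ¹-sphere and minimizes the squared distance to `x` over the ℓ¹-sphere. -/
theorem l1_sphere_projection
    (m : ℕ) (x : Fin m → ℝ) (hx : x ≠ 0) (hx1 : 1 ≤ ∑ i, |x i|)
    (p : Fin m → ℝ)
    (hpmem : (∀ i, 0 ≤ p i) ∧ ∑ i, p i = 1)
    (hpproj : ∀ z : Fin m → ℝ, (∀ i, 0 ≤ z i) → (∑ i, z i = 1) →
      ∑ i, (p i - |x i|) ^ 2 ≤ ∑ i, (z i - |x i|) ^ 2)
    (y : Fin m → ℝ) (hy : ∀ i, y i = Real.sign (x i) * p i) :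
    (∑ i, |y i| = 1) ∧
    ∀ z : Fin m → ℝ, (∑ i, |z i| = 1) →
      ∑ i, (y i - x i) ^ 2 ≤ ∑ i, (z i - x i) ^ 2 :=
  l1_sphere_projection_general m x hx1 p hpmem hpproj y hy
end
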